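/- arXiv:2102.10712 — 3 statements merged into one kernel-verified Lean document; each statement's English description precedes it below -/
import Mathlib

section
/- Let Σ₀ and Σ₁ be symmetric positive definite d×d real matrices. If F₁ and F₂ are symmetric positive semidefinite d×d matrices satisfying F₁ Σ₀ F₁ = Σ₁ and F₂ Σ₀ F₂ = Σ₁, then F₁ = F₂. That is, the symmetric positive semidefinite solution F of the matrix equation F Σ₀ F = Σ₁ is unique. -/
open scoped MatrixOrder

/-!
Conjugating by the positive definite square root `R` of `S₀` turns `F S₀ F = S₁` into
`(R F R)² = R S₁ R`, where `R F R` is again positive semidefinite. Positive semidefinite square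
roots are unique, so `R F R` is determined by `S₁`, and `F` by cancelling the invertible `R`.
-/

namespace Matrix.PosSemidef

open scoped ComplexOrder

variable {n 𝕜 : Type*} [Fintype n] [DecidableEq n] [RCLike 𝕜]

theorem eq_of_mul_mul_self_eq {S F₁ F₂ : Matrix n n 𝕜} (hS : S.PosDef)
    (hF₁ : F₁.PosSemidef) (hF₂ : F₂.PosSemidef) (h : F₁ * S * F₁ = F₂ * S * F₂) :
    F₁ = F₂ := by
  set R := CFC.sqrt S
  have hR : R.PosSemidef := nonneg_iff_posSemidef.mp (CFC.sqrt_nonneg S)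
  have hRR : R * R = S := CFC.sqrt_mul_sqrt_self S hS.posSemidef.nonneg
  have hR_unit : IsUnit R := (CFC.isUnit_sqrt_iff S hS.posSemidef.nonneg).mpr hS.isUnit
  have conj_nonneg : ∀ F : Matrix n n 𝕜, F.PosSemidef → 0 ≤ R * F * R := fun F hF => by
    simpa only [hR.isHermitian.eq] using (hF.conjTranspose_mul_mul_same R).nonneg
  have conj_mul_self : ∀ F : Matrix n n 𝕜, R * F * R * (R * F * R) = R * (F * S * F) * R :=
    fun F => by rw [← hRR]; noncomm_ring
  have hconj : R * F₁ * R = R * F₂ * R := by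
    rw [← CFC.mul_self_eq_mul_self_iff _ _ (conj_nonneg F₁ hF₁) (conj_nonneg F₂ hF₂),
      conj_mul_self, conj_mul_self, h]
  simpa only [Matrix.mul_assoc, hR_unit.mul_right_inj, hR_unit.mul_left_inj] using hconj

end Matrix.PosSemidef

theorem optimal_transport_matrix_unique_general
    {d : ℕ} (S₀ S₁ F₁ F₂ : Matrix (Fin d) (Fin d) ℝ)
    (hS₀ : S₀.PosDef)
    (hF₁ : F₁.PosSemidef) (hF₂ : F₂.PosSemidef)
    (h₁ : F₁ * S₀ * F₁ = S₁) (h₂ : F₂ * S₀ * F₂ = S₁) :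
    F₁ = F₂ :=
  hF₁.eq_of_mul_mul_self_eq hS₀ hF₂ (h₁.trans h₂.symm)

/-- **Uniqueness of the symmetric positive semidefinite solution of `F Σ₀ F = Σ₁`.**
If `S₀`, `S₁` are symmetric positive definite and `F₁`, `F₂` are symmetric positive
semidefinite with `F₁ S₀ F₁ = S₁` and `F₂ S₀ F₂ = S₁`, then `F₁ = F₂`. -/
theorem optimal_transport_matrix_unique
    {d : ℕ} (S₀ S₁ F₁ F₂ : Matrix (Fin d) (Fin d) ℝ)
    (hS₀ : S₀.PosDef) (hS₁ : S₁.PosDef)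
    (hF₁ : F₁.PosSemidef) (hF₂ : F₂.PosSemidef)
    (h₁ : F₁ * S₀ * F₁ = S₁) (h₂ : F₂ * S₀ * F₂ = S₁) :
    F₁ = F₂ :=
  optimal_transport_matrix_unique_general S₀ S₁ F₁ F₂ hS₀ hF₁ hF₂ h₁ h₂
end

section
/- Let γ_d denote the standard Gaussian measure on ℝ^d, let Σ₀, Σ₁ be symmetric positive definite d×d matrices and m₀, m₁ ∈ ℝ^d, and let μ₀ and μ₁ be the pushforwards of γ_d under x ↦ Σ₀^{1/2}x + m₀ and x ↦ Σ₁^{1/2}x + m₁ respectively. Let F be the unique symmetric positive definite solution of F Σ₀ F = Σ₁ and T(x) = F(x − m₀) + m₁. Then the deterministic coupling π_T = (id, T)_*μ₀ is a coupling of μ₀ and μ₁ (its first and second marginals are μ₀ and μ₁), and it is optimal for the quadratic cost: for every probability measure π on ℝ^d × ℝ^d whose first marginal is μ₀ and second marginal is μ₁, ∫ |x − y|² dπ(x, y) ≥ ∫ |x − T(x)|² dμ₀(x). -/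
/-!
The standard Gaussian is invariant under orthogonal maps, so its affine image `x ↦ A x + m` depends
only on `A Aᵀ`. Since `(F R₀)(F R₀)ᵀ = F Σ₀ F = Σ₁ = R₁ R₁ᵀ`, the map `T` sends `μ₀` to `μ₁`.

For optimality, `T` is the gradient of the convex potential
`φ(x) = ⟨x - m₀, F (x - m₀)⟩ / 2 + ⟨m₁, x⟩ + const`, whose Legendre transform `φ*` is the potential
of the same shape built from `F⁻¹`. Fenchel–Young gives `⟨x, y⟩ ≤ φ x + φ* y` with equality on the
graph of `T`, so `|x - y|² ≥ (|x|² - 2 φ x) + (|y|² - 2 φ* y)` with equality when `y = T x`.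
Integrating against any coupling, the right-hand side only sees the marginals, which are Gaussian
and hence have finite second moments.
-/

open Matrix MeasureTheory ProbabilityTheory

section StandardGaussian

variable {ι : Type*} [Fintype ι]

lemma pi_gaussianReal_eq_map_stdGaussian :
    Measure.pi (fun _ : ι => gaussianReal 0 1)
      = (stdGaussian (EuclideanSpace ℝ ι)).map WithLp.ofLp := by
  rw [← map_pi_eq_stdGaussian, Measure.map_map (by fun_prop) (by fun_prop)]
  exact Measure.map_id.symm

instance isGaussian_pi_gaussianReal : IsGaussian (Measure.pi fun _ : ι => gaussianReal 0 1) := by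
  rw [pi_gaussianReal_eq_map_stdGaussian]
  exact isGaussian_map_equiv (PiLp.continuousLinearEquiv 2 ℝ fun _ : ι => ℝ)

instance isGaussian_map_mulVec_add {κ : Type*} [Fintype κ] {μ : Measure (ι → ℝ)} [IsGaussian μ]
    (A : Matrix κ ι ℝ) (m : κ → ℝ) : IsGaussian (μ.map fun x => A *ᵥ x + m) := by
  have : (fun x => A *ᵥ x + m) = (· + m) ∘ (LinearMap.toContinuousLinearMap A.mulVecLin) := rfl
  rw [this, ← Measure.map_map (by fun_prop) (by fun_prop)]
  infer_instance

lemma map_mulVec_pi_gaussianReal [DecidableEq ι] {U : Matrix ι ι ℝ}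
    (hU : U ∈ orthogonalGroup ι ℝ) :
    (Measure.pi fun _ : ι => gaussianReal 0 1).map U.mulVec
      = Measure.pi fun _ => gaussianReal 0 1 := by
  let e : EuclideanSpace ℝ ι ≃ₗᵢ[ℝ] EuclideanSpace ℝ ι :=
    Unitary.linearIsometryEquiv ⟨toEuclideanCLM (𝕜 := ℝ) U, Unitary.map_mem _ hU⟩
  have he : U.mulVec ∘ WithLp.ofLp = WithLp.ofLp ∘ e := by
    ext x : 1
    change U *ᵥ x.ofLp = (toEuclideanCLM (𝕜 := ℝ) U (WithLp.toLp 2 x.ofLp)).ofLp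
    rw [toEuclideanCLM_toLp]
  rw [pi_gaussianReal_eq_map_stdGaussian, Measure.map_map (by fun_prop) (by fun_prop), he,
    ← Measure.map_map (by fun_prop) (by fun_prop), stdGaussian_map]

lemma inv_mul_mem_orthogonalGroup [DecidableEq ι] {A B : Matrix ι ι ℝ} (hB : IsUnit B.det)
    (h : A * Aᵀ = B * Bᵀ) : B⁻¹ * A ∈ orthogonalGroup ι ℝ := by
  rw [mem_orthogonalGroup_iff, transpose_mul, transpose_nonsing_inv, mul_assoc, ← mul_assoc A,
    h, ← mul_assoc, ← mul_assoc, nonsing_inv_mul _ hB, one_mul,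
    mul_nonsing_inv _ (by rwa [det_transpose])]

lemma map_mulVec_add_pi_gaussianReal_eq [DecidableEq ι] {A B : Matrix ι ι ℝ} (hB : IsUnit B.det)
    (h : A * Aᵀ = B * Bᵀ) (m : ι → ℝ) :
    (Measure.pi fun _ : ι => gaussianReal 0 1).map (fun x => A *ᵥ x + m)
      = (Measure.pi fun _ : ι => gaussianReal 0 1).map (fun x => B *ᵥ x + m) := by
  have hA : (fun x => A *ᵥ x + m) = (fun x => B *ᵥ x + m) ∘ (B⁻¹ * A).mulVec := by
    ext x : 1
    simp [mulVec_mulVec, ← mul_assoc, mul_nonsing_inv _ hB]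
  rw [hA, ← Measure.map_map (by fun_prop) (by fun_prop),
    map_mulVec_pi_gaussianReal (inv_mul_mem_orthogonalGroup hB h)]

end StandardGaussian

section Duality

variable {α β : Type*} [MeasurableSpace α] [MeasurableSpace β]

lemma ofReal_integral_le_lintegral_ofReal_of_le {μ : Measure α} {h c : α → ℝ}
    (hh : Integrable h μ) (hle : ∀ a, h a ≤ c a) (hc : ∀ a, 0 ≤ c a) :
    ENNReal.ofReal (∫ a, h a ∂μ) ≤ ∫⁻ a, ENNReal.ofReal (c a) ∂μ :=
  calc ENNReal.ofReal (∫ a, h a ∂μ)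
      ≤ ENNReal.ofReal (∫ a, max (h a) 0 ∂μ) :=
        ENNReal.ofReal_le_ofReal (integral_mono hh hh.pos_part fun _ => le_max_left _ _)
    _ = ∫⁻ a, ENNReal.ofReal (max (h a) 0) ∂μ :=
        ofReal_integral_eq_lintegral_ofReal hh.pos_part (ae_of_all _ fun _ => le_max_right _ _)
    _ ≤ ∫⁻ a, ENNReal.ofReal (c a) ∂μ :=
        lintegral_mono fun a => ENNReal.ofReal_le_ofReal (max_le (hle a) (hc a))

theorem lintegral_comp_graph_le_of_potentials {μ : Measure α} {π : Measure (α × β)} {T : α → β}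
    {c : α → β → ℝ} {f : α → ℝ} {g : β → ℝ} (hT : Measurable T)
    (hf : Integrable f μ) (hg : Integrable g (μ.map T))
    (hπ₁ : π.map Prod.fst = μ) (hπ₂ : π.map Prod.snd = μ.map T) (hc : ∀ x y, 0 ≤ c x y)
    (hle : ∀ x y, f x + g y ≤ c x y) (heq : ∀ x, c x (T x) = f x + g (T x)) :
    ∫⁻ x, ENNReal.ofReal (c x (T x)) ∂μ ≤ ∫⁻ p, ENNReal.ofReal (c p.1 p.2) ∂π := by
  have hgT : Integrable (fun x => g (T x)) μ := hg.comp_measurable hT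
  have hf₁ : Integrable (fun p => f p.1) π := (hπ₁ ▸ hf).comp_measurable measurable_fst
  have hg₂ : Integrable (fun p => g p.2) π := (hπ₂ ▸ hg).comp_measurable measurable_snd
  have hmarginals : ∫ x, f x + g (T x) ∂μ = ∫ p, f p.1 + g p.2 ∂π := by
    rw [integral_add hf hgT, integral_add hf₁ hg₂, ← integral_map hT.aemeasurable hg.1,
      ← hπ₂, ← hπ₁, integral_map measurable_fst.aemeasurable (hπ₁ ▸ hf.1),
      integral_map measurable_snd.aemeasurable (hπ₂ ▸ hg.1)]
  calc ∫⁻ x, ENNReal.ofReal (c x (T x)) ∂μ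
      = ENNReal.ofReal (∫ x, f x + g (T x) ∂μ) := by
        simp_rw [heq]
        exact (ofReal_integral_eq_lintegral_ofReal (hf.add hgT)
          (ae_of_all _ fun x => (hc x (T x)).trans_eq (heq x))).symm
    _ ≤ ∫⁻ p, ENNReal.ofReal (c p.1 p.2) ∂π := by
        rw [hmarginals]
        exact ofReal_integral_le_lintegral_ofReal_of_le (hf₁.add hg₂) (fun p => hle _ _)
          fun p => hc _ _

end Duality

section SecondMoments

variable {α ι κ : Type*} [MeasurableSpace α] [Fintype ι] [Fintype κ] {μ : Measure α}

lemma MeasureTheory.MemLp.mulVec {p : ENNReal} {u : α → ι → ℝ} (hu : MemLp u p μ)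
    (A : Matrix κ ι ℝ) : MemLp (fun a => A *ᵥ u a) p μ :=
  (LinearMap.toContinuousLinearMap A.mulVecLin).comp_memLp' hu

lemma MeasureTheory.MemLp.integrable_dotProduct {u v : α → ι → ℝ} (hu : MemLp u 2 μ)
    (hv : MemLp v 2 μ) : Integrable (fun a => u a ⬝ᵥ v a) μ :=
  integrable_finsetSum _ fun i _ => (hu.eval i).integrable_mul (hv.eval i)

end SecondMoments

section AffineBrenier

variable {ι : Type*} [Fintype ι]

/-- Brenier potential of `x ↦ F (x - m₀) + m₁`, normalised so that its Legendre transform is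
`affineBrenierPotential F⁻¹ m₁ m₀`. -/
noncomputable def affineBrenierPotential (F : Matrix ι ι ℝ) (m₀ m₁ x : ι → ℝ) : ℝ :=
  (x - m₀) ⬝ᵥ F *ᵥ (x - m₀) / 2 + m₁ ⬝ᵥ x - m₀ ⬝ᵥ m₁ / 2

lemma integrable_affineBrenierPotential (F : Matrix ι ι ℝ) (m₀ m₁ : ι → ℝ)
    {μ : Measure (ι → ℝ)} [IsFiniteMeasure μ] (hμ : MemLp id 2 μ) :
    Integrable (affineBrenierPotential F m₀ m₁) μ := by
  have hc : MemLp (fun x : ι → ℝ => x - m₀) 2 μ := hμ.sub (memLp_const m₀)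
  exact (((hc.integrable_dotProduct (hc.mulVec F)).div_const 2).add
    ((memLp_const m₁).integrable_dotProduct hμ)).sub (integrable_const _)

variable [DecidableEq ι] {F : Matrix ι ι ℝ}

lemma sub_inv_mulVec_dotProduct_mulVec (hF : F.IsSymm) (hdet : IsUnit F.det) (u v : ι → ℝ) :
    (u - F⁻¹ *ᵥ v) ⬝ᵥ F *ᵥ (u - F⁻¹ *ᵥ v) = u ⬝ᵥ F *ᵥ u - 2 * (u ⬝ᵥ v) + v ⬝ᵥ F⁻¹ *ᵥ v := by
  have hFF : F *ᵥ (F⁻¹ *ᵥ v) = v := by rw [mulVec_mulVec, mul_nonsing_inv _ hdet, one_mulVec]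
  have hsymm : F⁻¹ *ᵥ v ⬝ᵥ F *ᵥ u = u ⬝ᵥ v := by
    rw [dotProduct_mulVec, ← mulVec_transpose, hF.eq, hFF, dotProduct_comm]
  simp only [mulVec_sub, hFF, sub_dotProduct, dotProduct_sub, hsymm]
  rw [dotProduct_comm (F⁻¹ *ᵥ v) v]
  ring

lemma affineBrenierPotential_add_inv_sub_dotProduct (hF : F.IsSymm) (hdet : IsUnit F.det)
    (m₀ m₁ x y : ι → ℝ) :
    affineBrenierPotential F m₀ m₁ x + affineBrenierPotential F⁻¹ m₁ m₀ y - x ⬝ᵥ y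
      = (x - m₀ - F⁻¹ *ᵥ (y - m₁)) ⬝ᵥ F *ᵥ (x - m₀ - F⁻¹ *ᵥ (y - m₁)) / 2 := by
  rw [sub_inv_mulVec_dotProduct_mulVec hF hdet]
  simp only [affineBrenierPotential, sub_dotProduct, dotProduct_sub]
  rw [dotProduct_comm m₀ y, dotProduct_comm m₀ m₁, dotProduct_comm m₁ x]
  ring

lemma sum_sub_sq_eq_affineBrenierPotential (hF : F.IsSymm) (hdet : IsUnit F.det)
    (m₀ m₁ x y : ι → ℝ) :
    ∑ i, (x i - y i) ^ 2
      = (x ⬝ᵥ x - 2 * affineBrenierPotential F m₀ m₁ x)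
        + (y ⬝ᵥ y - 2 * affineBrenierPotential F⁻¹ m₁ m₀ y)
        + (x - m₀ - F⁻¹ *ᵥ (y - m₁)) ⬝ᵥ F *ᵥ (x - m₀ - F⁻¹ *ᵥ (y - m₁)) := by
  have hsq : ∑ i, (x i - y i) ^ 2 = x ⬝ᵥ x - 2 * (x ⬝ᵥ y) + y ⬝ᵥ y := by
    simp only [dotProduct, Finset.mul_sum, ← Finset.sum_add_distrib, ← Finset.sum_sub_distrib]
    exact Finset.sum_congr rfl fun i _ => by ring
  have hFY := affineBrenierPotential_add_inv_sub_dotProduct hF hdet m₀ m₁ x y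
  rw [hsq]
  linarith

theorem lintegral_sum_sub_sq_affine_le (hF : F.PosDef) (m₀ m₁ : ι → ℝ) {μ : Measure (ι → ℝ)}
    [IsFiniteMeasure μ] (hμ : MemLp id 2 μ) {π : Measure ((ι → ℝ) × (ι → ℝ))}
    (hπ₁ : π.map Prod.fst = μ) (hπ₂ : π.map Prod.snd = μ.map fun x => F *ᵥ (x - m₀) + m₁) :
    ∫⁻ x, ENNReal.ofReal (∑ i, (x i - (F *ᵥ (x - m₀) + m₁) i) ^ 2) ∂μ
      ≤ ∫⁻ p, ENNReal.ofReal (∑ i, (p.1 i - p.2 i) ^ 2) ∂π := by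
  have hT : Measurable fun x => F *ᵥ (x - m₀) + m₁ := by fun_prop
  have hsymm : F.IsSymm := isHermitian_iff_isSymm.mp hF.isHermitian
  have hdet : IsUnit F.det := isUnit_iff_ne_zero.mpr hF.det_pos.ne'
  have hν : MemLp id 2 (μ.map fun x => F *ᵥ (x - m₀) + m₁) := by
    rw [memLp_map_measure_iff aestronglyMeasurable_id hT.aemeasurable]
    exact ((hμ.sub (memLp_const m₀)).mulVec F).add (memLp_const m₁)
  have hf : Integrable (fun x => x ⬝ᵥ x - 2 * affineBrenierPotential F m₀ m₁ x) μ :=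
    (hμ.integrable_dotProduct hμ).sub ((integrable_affineBrenierPotential F m₀ m₁ hμ).const_mul 2)
  have hg : Integrable (fun y => y ⬝ᵥ y - 2 * affineBrenierPotential F⁻¹ m₁ m₀ y)
      (μ.map fun x => F *ᵥ (x - m₀) + m₁) :=
    (hν.integrable_dotProduct hν).sub ((integrable_affineBrenierPotential F⁻¹ m₁ m₀ hν).const_mul 2)
  have hle : ∀ x y, (x ⬝ᵥ x - 2 * affineBrenierPotential F m₀ m₁ x)
      + (y ⬝ᵥ y - 2 * affineBrenierPotential F⁻¹ m₁ m₀ y) ≤ ∑ i, (x i - y i) ^ 2 := by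
    intro x y
    have hgap := hF.posSemidef.dotProduct_mulVec_nonneg (x - m₀ - F⁻¹ *ᵥ (y - m₁))
    rw [star_trivial] at hgap
    rw [sum_sub_sq_eq_affineBrenierPotential hsymm hdet m₀ m₁]
    linarith
  have heq : ∀ x, ∑ i, (x i - (F *ᵥ (x - m₀) + m₁) i) ^ 2
      = (x ⬝ᵥ x - 2 * affineBrenierPotential F m₀ m₁ x)
        + ((F *ᵥ (x - m₀) + m₁) ⬝ᵥ (F *ᵥ (x - m₀) + m₁)
          - 2 * affineBrenierPotential F⁻¹ m₁ m₀ (F *ᵥ (x - m₀) + m₁)) := by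
    intro x
    rw [sum_sub_sq_eq_affineBrenierPotential hsymm hdet m₀ m₁, add_sub_cancel_right, mulVec_mulVec,
      nonsing_inv_mul _ hdet, one_mulVec, sub_self, zero_dotProduct, add_zero]
  exact lintegral_comp_graph_le_of_potentials hT hf hg hπ₁ hπ₂
    (fun _ _ => Finset.sum_nonneg fun _ _ => sq_nonneg _) hle heq

end AffineBrenier

theorem gaussian_optimal_transport_coupling_general
    {d : ℕ} (S₀ S₁ R₀ R₁ F : Matrix (Fin d) (Fin d) ℝ)
    (hS₁ : S₁.PosDef)
    (hR₀ : R₀.PosSemidef) (hR₀sq : R₀ * R₀ = S₀)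
    (hR₁ : R₁.PosSemidef) (hR₁sq : R₁ * R₁ = S₁)
    (m₀ m₁ : Fin d → ℝ)
    (hF : F.PosDef) (hFeq : F * S₀ * F = S₁) :
    let γ : Measure (Fin d → ℝ) := Measure.pi fun _ => gaussianReal 0 1
    let μ₀ : Measure (Fin d → ℝ) := γ.map (fun x => R₀.mulVec x + m₀)
    let μ₁ : Measure (Fin d → ℝ) := γ.map (fun x => R₁.mulVec x + m₁)
    let T : (Fin d → ℝ) → (Fin d → ℝ) := fun x => F.mulVec (x - m₀) + m₁
    let πT : Measure ((Fin d → ℝ) × (Fin d → ℝ)) := μ₀.map (fun x => (x, T x))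
    (πT.map Prod.fst = μ₀ ∧ πT.map Prod.snd = μ₁) ∧
    ∀ π : Measure ((Fin d → ℝ) × (Fin d → ℝ)), IsProbabilityMeasure π →
      π.map Prod.fst = μ₀ → π.map Prod.snd = μ₁ →
      ∫⁻ p, ENNReal.ofReal (∑ i, (p.1 i - p.2 i) ^ 2) ∂π
        ≥ ∫⁻ x, ENNReal.ofReal (∑ i, (x i - T x i) ^ 2) ∂μ₀ := by
  intro γ μ₀ μ₁ T πT
  have hT : Measurable T := by fun_prop
  have hR₁det : IsUnit R₁.det :=
    (isUnit_iff_isUnit_det R₁).mp (isUnit_of_mul_isUnit_left (hR₁sq ▸ hS₁.isUnit))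
  have hcov : (F * R₀) * (F * R₀)ᵀ = R₁ * R₁ᵀ := by
    rw [transpose_mul, (isHermitian_iff_isSymm.mp hR₀.1).eq, (isHermitian_iff_isSymm.mp hF.1).eq,
      (isHermitian_iff_isSymm.mp hR₁.1).eq, hR₁sq, ← hFeq, ← hR₀sq]
    simp only [mul_assoc]
  have hμ₀T : μ₀.map T = μ₁ := by
    rw [Measure.map_map hT (by fun_prop)]
    calc γ.map (T ∘ fun x => R₀ *ᵥ x + m₀) = γ.map (fun x => (F * R₀) *ᵥ x + m₁) := by
          congr 1
          ext x : 1
          simp [T, mulVec_mulVec]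
      _ = μ₁ := map_mulVec_add_pi_gaussianReal_eq hR₁det hcov m₁
  refine ⟨⟨(Measure.fst_map_prodMk hT).trans Measure.map_id,
    (Measure.snd_map_prodMk measurable_id).trans hμ₀T⟩, fun π _ hπ₁ hπ₂ => ?_⟩
  exact lintegral_sum_sub_sq_affine_le hF m₀ m₁ IsGaussian.memLp_two_id hπ₁ (hπ₂.trans hμ₀T.symm)

/-- **Optimality of the affine coupling between Gaussians.**
With `γ_d` the standard Gaussian measure on `ℝ^d`, `μ₀ = N(m₀, Σ₀)` and
`μ₁ = N(m₁, Σ₁)` defined as pushforwards of `γ_d` under `x ↦ Σᵢ^{1/2}x + mᵢ`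
(the square roots being given as `R₀`, `R₁`), and `F` the (unique) symmetric
positive definite solution of `F Σ₀ F = Σ₁`, the deterministic coupling
`π_T = (id, T)_*μ₀` with `T(x) = F(x - m₀) + m₁` is a coupling of `μ₀` and `μ₁`,
and for every coupling `π` of `μ₀` and `μ₁` the quadratic transport cost of `π`
is at least that of `π_T`. -/
theorem gaussian_optimal_transport_coupling
    {d : ℕ} (S₀ S₁ R₀ R₁ F : Matrix (Fin d) (Fin d) ℝ)
    (hS₀ : S₀.PosDef) (hS₁ : S₁.PosDef)
    (hR₀ : R₀.PosSemidef) (hR₀sq : R₀ * R₀ = S₀)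
    (hR₁ : R₁.PosSemidef) (hR₁sq : R₁ * R₁ = S₁)
    (m₀ m₁ : Fin d → ℝ)
    (hF : F.PosDef) (hFeq : F * S₀ * F = S₁) :
    let γ : Measure (Fin d → ℝ) := Measure.pi fun _ => gaussianReal 0 1
    let μ₀ : Measure (Fin d → ℝ) := γ.map (fun x => R₀.mulVec x + m₀)
    let μ₁ : Measure (Fin d → ℝ) := γ.map (fun x => R₁.mulVec x + m₁)
    let T : (Fin d → ℝ) → (Fin d → ℝ) := fun x => F.mulVec (x - m₀) + m₁
    let πT : Measure ((Fin d → ℝ) × (Fin d → ℝ)) := μ₀.map (fun x => (x, T x))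
    (πT.map Prod.fst = μ₀ ∧ πT.map Prod.snd = μ₁) ∧
    ∀ π : Measure ((Fin d → ℝ) × (Fin d → ℝ)), IsProbabilityMeasure π →
      π.map Prod.fst = μ₀ → π.map Prod.snd = μ₁ →
      ∫⁻ p, ENNReal.ofReal (∑ i, (p.1 i - p.2 i) ^ 2) ∂π
        ≥ ∫⁻ x, ENNReal.ofReal (∑ i, (x i - T x i) ^ 2) ∂μ₀ :=
  gaussian_optimal_transport_coupling_general S₀ S₁ R₀ R₁ F hS₁ hR₀ hR₀sq hR₁ hR₁sq m₀ m₁ hF hFeq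
end

section
/- Let Σ be a symmetric positive definite d×d real matrix, m ∈ ℝ^d, and let ρ(x) = exp(−½ (x − m)ᵀ Σ⁻¹ (x − m)) be the (unnormalized) Gaussian density. Let v ∈ ℝ^d and take the linear observation function h(x) = ⟨v, x⟩, with ρ-mean ĥ = ⟨v, m⟩. Then φ(x) = ⟨Σ v, x − m⟩ solves the weighted Poisson equation: −∇·(ρ(x) ∇φ(x)) = (h(x) − ĥ) ρ(x) for all x ∈ ℝ^d. In particular, the gain function ∇φ(x) = Σv is constant in x and equals the Kalman gain. -/
/-!
The gradient of the Gaussian weight is `∇ρ(x) = -ρ(x) Σ⁻¹(x - m)`. Since `φ` is affine its gradient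
is the constant `Σv`, so `∇·(ρ Σv) = ⟨∇ρ, Σv⟩ = -ρ ⟨Σ⁻¹(x - m), Σv⟩ = -ρ ⟨x - m, v⟩` by the symmetry
of `Σ`, which is `-(h - ĥ)ρ`.
-/

open Matrix

/-- The gradient of a scalar function on `ℝ^d`. -/
noncomputable def grad {d : ℕ} (f : (Fin d → ℝ) → ℝ) (x : Fin d → ℝ) : Fin d → ℝ :=
  fun i => fderiv ℝ f x (Pi.single i 1)

/-- The divergence of a vector field on `ℝ^d`. -/
noncomputable def div {d : ℕ} (v : (Fin d → ℝ) → Fin d → ℝ) (x : Fin d → ℝ) : ℝ :=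
  ∑ i, fderiv ℝ v x (Pi.single i 1) i

section DotProduct

variable {ι E : Type*} [Fintype ι] [NormedAddCommGroup E] [NormedSpace ℝ E]
  {f g : E → ι → ℝ} {f' g' : E →L[ℝ] ι → ℝ} {x : E}

variable (ι) in
noncomputable def dotProductCLM : (ι → ℝ) →L[ℝ] (ι → ℝ) →L[ℝ] ℝ :=
  (dotProductBilin ℝ ℝ).toContinuousBilinearMap

@[simp]
theorem dotProductCLM_apply (v w : ι → ℝ) : dotProductCLM ι v w = v ⬝ᵥ w := rfl

theorem HasFDerivAt.dotProduct (hf : HasFDerivAt f f' x) (hg : HasFDerivAt g g' x) :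
    HasFDerivAt (fun y => f y ⬝ᵥ g y)
      ((dotProductCLM ι).precompR E (f x) g' + (dotProductCLM ι).precompL E f' (g x)) x :=
  (dotProductCLM ι).hasFDerivAt_of_bilinear hf hg

end DotProduct

theorem Matrix.IsSymm.mulVec_dotProduct_inv_mulVec {ι α : Type*} [Fintype ι] [DecidableEq ι]
    [CommRing α] {S : Matrix ι ι α} (hS : S.IsSymm) (hdet : IsUnit S.det) (v w : ι → α) :
    S *ᵥ v ⬝ᵥ S⁻¹ *ᵥ w = v ⬝ᵥ w := by
  rw [← vecMul_transpose, hS.eq, dotProduct_mulVec, vecMul_vecMul, mul_nonsing_inv _ hdet,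
    vecMul_one]

section Gaussian

variable {ι : Type*} [Fintype ι]

/-- `A` plays the role of the precision matrix `Σ⁻¹`. -/
noncomputable def unnormalizedGaussian (A : Matrix ι ι ℝ) (m x : ι → ℝ) : ℝ :=
  Real.exp (-(1 / 2) * ((x - m) ⬝ᵥ A *ᵥ (x - m)))

theorem hasFDerivAt_unnormalizedGaussian (A : Matrix ι ι ℝ) (m x : ι → ℝ) :
    HasFDerivAt (unnormalizedGaussian A m)
      (unnormalizedGaussian A m x • (-(1 / 2) : ℝ) •
        ((dotProductCLM ι).precompR _ (x - m) (LinearMap.toContinuousLinearMap A.mulVecLin) +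
          (dotProductCLM ι).precompL _ (.id ℝ _) (A *ᵥ (x - m)))) x := by
  have hsub : HasFDerivAt (fun y : ι → ℝ => y - m) (.id ℝ _) x := hasFDerivAt_sub_const m
  have hmulVec : HasFDerivAt (fun y => A *ᵥ (y - m))
      (LinearMap.toContinuousLinearMap A.mulVecLin) x := by
    simpa using (LinearMap.toContinuousLinearMap A.mulVecLin).hasFDerivAt.comp x hsub
  exact ((hsub.dotProduct hmulVec).const_mul _).exp

theorem differentiable_unnormalizedGaussian (A : Matrix ι ι ℝ) (m : ι → ℝ) :
    Differentiable ℝ (unnormalizedGaussian A m) :=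
  fun x => (hasFDerivAt_unnormalizedGaussian A m x).differentiableAt

theorem fderiv_unnormalizedGaussian_apply (A : Matrix ι ι ℝ) (m x u : ι → ℝ) :
    fderiv ℝ (unnormalizedGaussian A m) x u =
      -(1 / 2) * ((x - m) ⬝ᵥ A *ᵥ u + u ⬝ᵥ A *ᵥ (x - m)) * unnormalizedGaussian A m x := by
  rw [(hasFDerivAt_unnormalizedGaussian A m x).fderiv]
  simp only [FunLike.coe_smul, FunLike.coe_add, Pi.smul_apply, Pi.add_apply,
    ContinuousLinearMap.precompR_apply, ContinuousLinearMap.compL_apply,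
    ContinuousLinearMap.coe_comp, Function.comp_apply, LinearMap.coe_toContinuousLinearMap',
    mulVecLin_apply, dotProductCLM_apply, ContinuousLinearMap.precompL_apply,
    ContinuousLinearMap.coe_id', id_eq, smul_eq_mul]
  ring

theorem fderiv_unnormalizedGaussian_inv_apply_mulVec [DecidableEq ι] {S : Matrix ι ι ℝ}
    (hS : S.IsSymm) (hdet : IsUnit S.det) (m x v : ι → ℝ) :
    fderiv ℝ (unnormalizedGaussian S⁻¹ m) x (S *ᵥ v) =
      -((x - m) ⬝ᵥ v) * unnormalizedGaussian S⁻¹ m x := by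
  rw [fderiv_unnormalizedGaussian_apply, mulVec_mulVec, nonsing_inv_mul _ hdet, one_mulVec,
    hS.mulVec_dotProduct_inv_mulVec hdet, dotProduct_comm v]
  ring

end Gaussian

theorem grad_dotProduct_sub {d : ℕ} (w m x : Fin d → ℝ) :
    grad (fun y => w ⬝ᵥ (y - m)) x = w := by
  funext i
  rw [grad, ((hasFDerivAt_const w x).dotProduct (hasFDerivAt_sub_const m)).fderiv]
  simp

theorem div_smul_const {d : ℕ} {f : (Fin d → ℝ) → ℝ} {x : Fin d → ℝ}
    (hf : DifferentiableAt ℝ f x) (c : Fin d → ℝ) :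
    div (fun y => f y • c) x = fderiv ℝ f x c := by
  conv_rhs => rw [pi_eq_sum_univ' c, map_sum]
  simp [div, fderiv_smul_const hf, mul_comm]

/-- **Exact gain in the linear Gaussian case.** For the (unnormalized) Gaussian density
`ρ(x) = exp(-½(x-m)ᵀΣ⁻¹(x-m))` with `Σ` symmetric positive definite, the linear
observation `h(x) = ⟨v, x⟩` with `ρ`-mean `ĥ = ⟨v, m⟩`, the function
`φ(x) = ⟨Σv, x - m⟩` solves the weighted Poisson equation
`-∇·(ρ∇φ) = (h - ĥ)ρ`, and the gain `∇φ ≡ Σv` is the (constant) Kalman gain. -/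
theorem gaussian_poisson_equation_kalman_gain
    {d : ℕ} (S : Matrix (Fin d) (Fin d) ℝ) (hS : S.PosDef)
    (m v : Fin d → ℝ) :
    let ρ : (Fin d → ℝ) → ℝ :=
      fun x => Real.exp (-(1/2) * ((x - m) ⬝ᵥ S⁻¹.mulVec (x - m)))
    let h : (Fin d → ℝ) → ℝ := fun x => v ⬝ᵥ x
    let φ : (Fin d → ℝ) → ℝ := fun x => S.mulVec v ⬝ᵥ (x - m)
    (∀ x, -div (fun y => ρ y • grad φ y) x = (h x - v ⬝ᵥ m) * ρ x) ∧
    (∀ x, grad φ x = S.mulVec v) := by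
  intro ρ h φ
  have hgrad : ∀ x, grad φ x = S *ᵥ v := grad_dotProduct_sub (S *ᵥ v) m
  refine ⟨fun x => ?_, hgrad⟩
  have hSymm : S.IsSymm := isHermitian_iff_isSymm.mp hS.isHermitian
  have hdet : IsUnit S.det := (isUnit_iff_isUnit_det S).mp hS.isUnit
  change -div (fun y => unnormalizedGaussian S⁻¹ m y • grad φ y) x =
    (v ⬝ᵥ x - v ⬝ᵥ m) * unnormalizedGaussian S⁻¹ m x
  simp only [hgrad]
  rw [div_smul_const ((differentiable_unnormalizedGaussian _ m) x),
    fderiv_unnormalizedGaussian_inv_apply_mulVec hSymm hdet, sub_dotProduct, dotProduct_comm x,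
    dotProduct_comm m]
  ring
end
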